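/- Let (X, ‖·‖) be a seminormed vector space, Y ⊆ X, k a positive integer, and W ⊆ ℝ^k bounded and nonempty. Let Y_{k,W} = {∑_{i=1}^k α_i y_i : α ∈ W, y_i ∈ Y}. Then for all δ > 0 and all τ ∈ (0,1), N_{‖·‖}(Y_{k,W}, δ) ≤ N_{‖·‖₁}(W, (1−τ)δ/R_Y) · N_{‖·‖}(Y, τδ/R_W)^k, where R_Y = sup_{y∈Y} ‖y‖ and R_W = sup_{α∈W} ‖α‖₁. -/

import Mathlib

/-!
Approximate `∑ αᵢ • yᵢ` by `∑ βᵢ • cᵢ`, with `β` the `ℓ¹`-center of `α` and each `cᵢ` the center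
of `yᵢ`. Writing `α • y - β • c = (α - β) • y + β • (y - c)`, the error is at most
`‖α - β‖₁ R_Y + ‖β‖₁ ε_Y`; the centers are internal, so `‖β‖₁ ≤ R_W`, and the radii
`(1 - τ)δ / R_Y` and `τδ / R_W` make this `δ`. The centers range over a set of at most
`N_W · N_Y ^ k` points.
-/

open Finset

section

variable {ι 𝕜 X : Type*}

section Estimates

variable [NormedField 𝕜] [SeminormedAddCommGroup X] [NormedSpace 𝕜 X]

theorem norm_smul_sub_smul_le (a b : 𝕜) (y c : X) :
    ‖a • y - b • c‖ ≤ ‖a - b‖ * ‖y‖ + ‖b‖ * ‖y - c‖ :=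
  calc ‖a • y - b • c‖ = ‖(a - b) • y + b • (y - c)‖ := by
        rw [sub_smul, smul_sub, sub_add_sub_cancel]
    _ ≤ ‖a - b‖ * ‖y‖ + ‖b‖ * ‖y - c‖ := by
        simpa only [norm_smul] using norm_add_le ((a - b) • y) (b • (y - c))

theorem norm_sum_smul_sub_sum_smul_le (s : Finset ι) {a b : ι → 𝕜} {y c : ι → X} {R ε : ℝ}
    (hy : ∀ i ∈ s, ‖y i‖ ≤ R) (hc : ∀ i ∈ s, ‖y i - c i‖ ≤ ε) :
    ‖∑ i ∈ s, a i • y i - ∑ i ∈ s, b i • c i‖ ≤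
      (∑ i ∈ s, ‖a i - b i‖) * R + (∑ i ∈ s, ‖b i‖) * ε := by
  rw [← sum_sub_distrib, sum_mul, sum_mul, ← sum_add_distrib]
  refine (norm_sum_le _ _).trans (sum_le_sum fun i hi => ?_)
  exact (norm_smul_sub_smul_le _ _ _ _).trans (by gcongr; exacts [hy i hi, hc i hi])

end Estimates

section WeightedSums

variable [Fintype ι] [AddCommMonoid X] [SMul 𝕜 X]

def Set.weightedSums (W : Set (ι → 𝕜)) (Y : Set X) : Set X :=
  {x | ∃ α ∈ W, ∃ y : ι → X, (∀ i, y i ∈ Y) ∧ x = ∑ i, α i • y i}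

theorem Set.weightedSums_mono {W₁ W₂ : Set (ι → 𝕜)} {Y₁ Y₂ : Set X} (hW : W₁ ⊆ W₂)
    (hY : Y₁ ⊆ Y₂) : W₁.weightedSums Y₁ ⊆ W₂.weightedSums Y₂ := by
  rintro x ⟨α, hα, y, hy, rfl⟩
  exact ⟨α, hW hα, y, fun i => hY (hy i), rfl⟩

variable [DecidableEq ι] [DecidableEq X]

def Finset.weightedSums (A : Finset (ι → 𝕜)) (C : Finset X) : Finset X :=
  (A ×ˢ Fintype.piFinset fun _ => C).image fun p => ∑ i, p.1 i • p.2 i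

theorem Finset.coe_weightedSums (A : Finset (ι → 𝕜)) (C : Finset X) :
    (A.weightedSums C : Set X) = (A : Set (ι → 𝕜)).weightedSums C := by
  ext x
  simp only [Finset.weightedSums, Set.weightedSums, coe_image, Set.mem_image, mem_coe,
    mem_product, Fintype.mem_piFinset, Prod.exists, Set.mem_ofPred_eq]
  constructor
  · rintro ⟨β, c, ⟨hβ, hc⟩, rfl⟩
    exact ⟨β, hβ, c, hc, rfl⟩
  · rintro ⟨β, hβ, c, hc, rfl⟩
    exact ⟨β, c, ⟨hβ, hc⟩, rfl⟩

theorem Finset.card_weightedSums_le (A : Finset (ι → 𝕜)) (C : Finset X) :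
    #(A.weightedSums C) ≤ #A * #C ^ Fintype.card ι :=
  card_image_le.trans_eq <| by rw [card_product, Fintype.card_piFinset, prod_const, card_univ]

end WeightedSums

section Covering

variable [NormedField 𝕜] [SeminormedAddCommGroup X] [NormedSpace 𝕜 X] [Fintype ι]
  [DecidableEq ι] [DecidableEq X]

theorem Set.exists_mem_weightedSums_norm_sub_le {W : Set (ι → 𝕜)} {Y : Set X}
    {A : Finset (ι → 𝕜)} {C : Finset X} {RY RW εW εY : ℝ} (hRY : 0 ≤ RY) (hεY : 0 ≤ εY)
    (hY : ∀ y ∈ Y, ‖y‖ ≤ RY) (hA : ∀ β ∈ A, ∑ i, ‖β i‖ ≤ RW)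
    (hAW : ∀ α ∈ W, ∃ β ∈ A, ∑ i, ‖α i - β i‖ ≤ εW) (hCY : ∀ y ∈ Y, ∃ c ∈ C, ‖y - c‖ ≤ εY) :
    ∀ x ∈ W.weightedSums Y, ∃ z ∈ A.weightedSums C, ‖x - z‖ ≤ εW * RY + RW * εY := by
  rintro x ⟨α, hα, y, hy, rfl⟩
  obtain ⟨β, hβ, hαβ⟩ := hAW α hα
  choose c hc hyc using fun i => hCY (y i) (hy i)
  have hz : ∑ i, β i • c i ∈ A.weightedSums C := by
    rw [← mem_coe, coe_weightedSums]
    exact ⟨β, hβ, c, hc, rfl⟩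
  refine ⟨_, hz, ?_⟩
  calc _ ≤ (∑ i, ‖α i - β i‖) * RY + (∑ i, ‖β i‖) * εY :=
        norm_sum_smul_sub_sum_smul_le _ (fun i _ => hY _ (hy i)) fun i _ => hyc i
    _ ≤ εW * RY + RW * εY := by gcongr; exact hA β hβ

end Covering

end

theorem stmt_10_general {X : Type*} [SeminormedAddCommGroup X] [NormedSpace ℝ X]
    (Y : Set X) (k : ℕ) (W : Set (Fin k → ℝ))
    (RY RW δ τ : ℝ) (hRY : 0 < RY) (hRW : 0 < RW)
    (hYbd : ∀ y ∈ Y, ‖y‖ ≤ RY) (hWbd : ∀ α ∈ W, ∑ i, |α i| ≤ RW)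
    (hδ : 0 < δ) (hτ0 : 0 < τ)
    (n₁ n₂ : ℕ)
    (CW : Finset (Fin k → ℝ)) (hCW : ↑CW ⊆ W) (hCWcard : CW.card ≤ n₁)
    (hCWcover : ∀ α ∈ W, ∃ β ∈ CW, ∑ i, |α i - β i| ≤ (1 - τ) * δ / RY)
    (CY : Finset X) (hCY : ↑CY ⊆ Y) (hCYcard : CY.card ≤ n₂)
    (hCYcover : ∀ y ∈ Y, ∃ c ∈ CY, ‖y - c‖ ≤ τ * δ / RW) :
    ∃ Z : Finset X,
      ↑Z ⊆ {x : X | ∃ α ∈ W, ∃ y : Fin k → X, (∀ i, y i ∈ Y) ∧ x = ∑ i, α i • y i} ∧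
      Z.card ≤ n₁ * n₂ ^ k ∧
      ∀ x ∈ {x : X | ∃ α ∈ W, ∃ y : Fin k → X, (∀ i, y i ∈ Y) ∧ x = ∑ i, α i • y i},
        ∃ z ∈ Z, ‖x - z‖ ≤ δ := by
  classical
  refine ⟨CW.weightedSums CY, ?_, ?_, fun x hx => ?_⟩
  · rw [coe_weightedSums]
    exact Set.weightedSums_mono hCW hCY
  · calc #(CW.weightedSums CY) ≤ #CW * #CY ^ k := by
          simpa only [Fintype.card_fin] using card_weightedSums_le CW CY
      _ ≤ n₁ * n₂ ^ k := by gcongr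
  · obtain ⟨z, hz, hxz⟩ := Set.exists_mem_weightedSums_norm_sub_le hRY.le (by positivity) hYbd
      (fun β hβ => by simpa only [Real.norm_eq_abs] using hWbd β (hCW hβ))
      (by simpa only [Real.norm_eq_abs] using hCWcover) hCYcover x hx
    refine ⟨z, hz, hxz.trans_eq ?_⟩
    field_simp
    ring

theorem stmt_10 {X : Type*} [SeminormedAddCommGroup X] [NormedSpace ℝ X]
    (Y : Set X) (k : ℕ) (hk : 0 < k) (W : Set (Fin k → ℝ)) (hWne : W.Nonempty)
    (RY RW δ τ : ℝ) (hRY : 0 < RY) (hRW : 0 < RW)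
    (hYbd : ∀ y ∈ Y, ‖y‖ ≤ RY) (hWbd : ∀ α ∈ W, ∑ i, |α i| ≤ RW)
    (hδ : 0 < δ) (hτ0 : 0 < τ) (hτ1 : τ < 1)
    (n₁ n₂ : ℕ)
    (CW : Finset (Fin k → ℝ)) (hCW : ↑CW ⊆ W) (hCWcard : CW.card ≤ n₁)
    (hCWcover : ∀ α ∈ W, ∃ β ∈ CW, ∑ i, |α i - β i| ≤ (1 - τ) * δ / RY)
    (CY : Finset X) (hCY : ↑CY ⊆ Y) (hCYcard : CY.card ≤ n₂)
    (hCYcover : ∀ y ∈ Y, ∃ c ∈ CY, ‖y - c‖ ≤ τ * δ / RW) :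
    ∃ Z : Finset X,
      ↑Z ⊆ {x : X | ∃ α ∈ W, ∃ y : Fin k → X, (∀ i, y i ∈ Y) ∧ x = ∑ i, α i • y i} ∧
      Z.card ≤ n₁ * n₂ ^ k ∧
      ∀ x ∈ {x : X | ∃ α ∈ W, ∃ y : Fin k → X, (∀ i, y i ∈ Y) ∧ x = ∑ i, α i • y i},
        ∃ z ∈ Z, ‖x - z‖ ≤ δ :=
  stmt_10_general Y k W RY RW δ τ hRY hRW hYbd hWbd hδ hτ0 n₁ n₂ CW hCW hCWcard hCWcover CY hCY
    hCYcard hCYcover
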